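/- arXiv:1910.09500 — 3 statements merged into one kernel-verified Lean document; each statement's English description precedes it below -/
import Mathlib

section
/- Let λ : ℤ₊ → ℝ satisfy (UB). For all x, y ∈ ℤ₊ and t ≥ 0: e^{tL}(x,y) = −(λ(x)/λ(y)) · [ Σ_{z=0}^{y} e^{tL}(x+1,z) − Σ_{z=0}^{y} e^{tL}(x,z) ]. -/
open Complex MeasureTheory Finset
open scoped Real ComplexOrder

/-- ψ_x(w) = ∏_{k=0}^{x} λ(k)/(λ(k)−w). -/
noncomputable def psiF (lam : ℕ → ℝ) (x : ℕ) (w : ℂ) : ℂ :=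
  ∏ k ∈ Finset.range (x + 1), (lam k : ℂ) / ((lam k : ℂ) - w)

/-- p_x(w) = ∏_{k=0}^{x−1} (λ(k)−w)/λ(k). -/
noncomputable def pF (lam : ℕ → ℝ) (x : ℕ) (w : ℂ) : ℂ :=
  ∏ k ∈ Finset.range x, (((lam k : ℂ) - w) / (lam k : ℂ))

/-- e^{tL}(x,y) := −(1/λ(y))·(1/(2πi)) ∮_{|w|=R} ψ_y(w) p_x(w) e^{−tw} dw,
the contour being the counterclockwise circle of radius R centred at 0. -/
noncomputable def eL (lam : ℕ → ℝ) (R t : ℝ) (x y : ℕ) : ℂ :=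
  -(1 / (lam y : ℂ)) * ((2 * (Real.pi : ℂ) * Complex.I)⁻¹ *
    ∮ w in C(0, R), psiF lam y w * pF lam x w * Complex.exp (-(t : ℂ) * w))

/-! With `S_y(w) = ∑_{z ≤ y} ψ_z(w) / λ(z)`, each sum `∑_{z ≤ y} e^{tL}(x, z)` is the contour
integral of `S_y p_x e^{-tw}`. The telescoping identity `w S_y = ψ_y - 1` and the recursion
`λ(x) (p_{x+1} - p_x) = -w p_x` turn `λ(x)` times the difference of the two sums into the
integral of `(1 - ψ_y) p_x e^{-tw}`; the part `p_x e^{-tw}` is entire, so it integrates to zero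
by Cauchy's theorem. -/

open Metric

section Algebra

variable {lam : ℕ → ℝ} {w : ℂ}

lemma psiF_succ (y : ℕ) :
    psiF lam (y + 1) w = psiF lam y w * ((lam (y + 1) : ℂ) / ((lam (y + 1) : ℂ) - w)) :=
  prod_range_succ _ _

lemma pF_succ (x : ℕ) : pF lam (x + 1) w = pF lam x w * (((lam x : ℂ) - w) / (lam x : ℂ)) :=
  prod_range_succ _ _

lemma mul_sum_psiF_div (hlam : ∀ k, (lam k : ℂ) ≠ 0) (hw : ∀ k, (lam k : ℂ) - w ≠ 0) (y : ℕ) :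
    w * ∑ z ∈ range (y + 1), psiF lam z w / lam z = psiF lam y w - 1 := by
  induction y with
  | zero =>
    have := hlam 0; have := hw 0
    simp only [psiF, zero_add, prod_range_one, sum_range_one]
    field_simp
    ring
  | succ y ih =>
    rw [sum_range_succ, mul_add, ih, psiF_succ]
    have := hlam (y + 1); have := hw (y + 1)
    field_simp
    ring

lemma lam_mul_pF_succ_sub (x : ℕ) (hx : (lam x : ℂ) ≠ 0) :
    (lam x : ℂ) * (pF lam (x + 1) w - pF lam x w) = -w * pF lam x w := by
  rw [pF_succ]
  field_simp
  ring

lemma lam_mul_sum_psiF_div_mul_pF_sub (hlam : ∀ k, (lam k : ℂ) ≠ 0)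
    (hw : ∀ k, (lam k : ℂ) - w ≠ 0) (x y : ℕ) :
    (lam x : ℂ) * ((∑ z ∈ range (y + 1), psiF lam z w / lam z) * (pF lam (x + 1) w - pF lam x w))
      = (1 - psiF lam y w) * pF lam x w := by
  linear_combination
    (∑ z ∈ range (y + 1), psiF lam z w / lam z) * lam_mul_pF_succ_sub (w := w) x (hlam x) -
      pF lam x w * mul_sum_psiF_div hlam hw y

end Algebra

section Contour

variable {lam : ℕ → ℝ} {R : ℝ}

lemma continuousOn_psiF {s : Set ℂ} (hs : ∀ k, ∀ w ∈ s, (lam k : ℂ) - w ≠ 0) (y : ℕ) :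
    ContinuousOn (psiF lam y) s :=
  continuousOn_finsetProd _ fun k _ ↦
    continuousOn_const.div (continuousOn_const.sub continuousOn_id) (hs k)

lemma differentiable_pF (x : ℕ) : Differentiable ℂ (pF lam x) := by
  unfold pF
  fun_prop

lemma circleIntegral_pF_mul_exp (hR : 0 ≤ R) (t : ℝ) (x : ℕ) :
    ∮ w in C(0, R), pF lam x w * exp (-(t : ℂ) * w) = 0 :=
  ((differentiable_pF x).mul (by fun_prop)).diffContOnCl.circleIntegral_eq_zero hR

lemma sum_eL_eq_circleIntegral (hR : 0 ≤ R) (hψ : ∀ z, ContinuousOn (psiF lam z) (sphere 0 R))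
    (t : ℝ) (x y : ℕ) :
    ∑ z ∈ range (y + 1), eL lam R t x z = -(2 * (π : ℂ) * I)⁻¹ *
      ∮ w in C(0, R), (∑ z ∈ range (y + 1), psiF lam z w / lam z) *
        (pF lam x w * exp (-(t : ℂ) * w)) := by
  have hE : Continuous fun w ↦ pF lam x w * exp (-(t : ℂ) * w) :=
    ((differentiable_pF x).mul (by fun_prop)).continuous
  have hint : ∀ z ∈ range (y + 1), CircleIntegrable
      (fun w ↦ psiF lam z w / lam z * (pF lam x w * exp (-(t : ℂ) * w))) 0 R := fun z _ ↦
    (((hψ z).div_const _).mul hE.continuousOn).circleIntegrable hR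
  simp_rw [sum_mul, circleIntegral.integral_fun_sum hint, mul_sum]
  refine sum_congr rfl fun z _ ↦ ?_
  have hpull : ∀ w, psiF lam z w / lam z * (pF lam x w * exp (-(t : ℂ) * w))
      = (lam z : ℂ)⁻¹ * (psiF lam z w * pF lam x w * exp (-(t : ℂ) * w)) := fun w ↦ by ring
  simp_rw [hpull, circleIntegral.integral_const_mul, eL]
  ring

lemma lam_mul_sub_circleIntegral (hR : 0 ≤ R) (hlam : ∀ k, (lam k : ℂ) ≠ 0)
    (hsphere : ∀ k, ∀ w ∈ sphere (0 : ℂ) R, (lam k : ℂ) - w ≠ 0) (t : ℝ) (x y : ℕ) :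
    (lam x : ℂ) *
      ((∮ w in C(0, R), (∑ z ∈ range (y + 1), psiF lam z w / lam z) *
          (pF lam (x + 1) w * exp (-(t : ℂ) * w))) -
        ∮ w in C(0, R), (∑ z ∈ range (y + 1), psiF lam z w / lam z) *
          (pF lam x w * exp (-(t : ℂ) * w)))
      = -∮ w in C(0, R), psiF lam y w * pF lam x w * exp (-(t : ℂ) * w) := by
  have hE : ∀ x, ContinuousOn (fun w ↦ pF lam x w * exp (-(t : ℂ) * w)) (sphere 0 R) :=
    fun x ↦ ((differentiable_pF x).mul (by fun_prop)).continuous.continuousOn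
  have hS : ContinuousOn (fun w ↦ ∑ z ∈ range (y + 1), psiF lam z w / lam z) (sphere 0 R) :=
    continuousOn_finsetSum _ fun z _ ↦ (continuousOn_psiF hsphere z).div_const _
  calc _ = ∮ w in C(0, R), (lam x : ℂ) *
        ((∑ z ∈ range (y + 1), psiF lam z w / lam z) * (pF lam (x + 1) w * exp (-(t : ℂ) * w)) -
          (∑ z ∈ range (y + 1), psiF lam z w / lam z) * (pF lam x w * exp (-(t : ℂ) * w))) := by
        rw [circleIntegral.integral_const_mul, circleIntegral.integral_sub
          ((hS.fun_mul (hE _)).circleIntegrable hR) ((hS.fun_mul (hE _)).circleIntegrable hR)]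
    _ = ∮ w in C(0, R), (pF lam x w * exp (-(t : ℂ) * w) -
          psiF lam y w * (pF lam x w * exp (-(t : ℂ) * w))) :=
        circleIntegral.integral_congr hR fun w hw ↦ by
          linear_combination exp (-(t : ℂ) * w) *
            lam_mul_sum_psiF_div_mul_pF_sub hlam (fun k ↦ hsphere k w hw) x y
    _ = _ := by
        rw [circleIntegral.integral_sub ((hE x).circleIntegrable hR)
          (((continuousOn_psiF hsphere y).fun_mul (hE x)).circleIntegrable hR),
          circleIntegral_pF_mul_exp hR, zero_sub]
        simp only [mul_assoc]

end Contour

theorem stmt_1_general (lam : ℕ → ℝ) (s M : ℝ) (hs : 0 < s)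
    (hlb : ∀ x, s ≤ lam x) (hub : ∀ x, lam x ≤ M)
    (R : ℝ) (hR : M < R) (t : ℝ) (x y : ℕ) :
    eL lam R t x y = -((lam x : ℂ) / (lam y : ℂ)) *
      ((∑ z ∈ Finset.range (y + 1), eL lam R t (x + 1) z) -
       (∑ z ∈ Finset.range (y + 1), eL lam R t x z)) := by
  have hpos : ∀ k, 0 < lam k := fun k ↦ hs.trans_le (hlb k)
  have hR0 : 0 ≤ R := ((hpos 0).trans_le (hub 0)).trans hR |>.le
  have hlam : ∀ k, (lam k : ℂ) ≠ 0 := fun k ↦ ofReal_ne_zero.mpr (hpos k).ne'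
  have hsphere : ∀ k, ∀ w ∈ sphere (0 : ℂ) R, (lam k : ℂ) - w ≠ 0 := by
    intro k w hw h
    rw [← sub_eq_zero.mp h, mem_sphere_zero_iff_norm, norm_real,
      Real.norm_of_nonneg (hpos k).le] at hw
    linarith [hub k]
  have hψ := continuousOn_psiF hsphere
  rw [sum_eL_eq_circleIntegral hR0 hψ, sum_eL_eq_circleIntegral hR0 hψ, eL]
  linear_combination
    -(2 * (π : ℂ) * I)⁻¹ / lam y * lam_mul_sub_circleIntegral hR0 hlam hsphere t x y

/-- the duality relation
e^{tL}(x,y) = −(λ(x)/λ(y)) [ Σ_{z=0}^{y} e^{tL}(x+1,z) − Σ_{z=0}^{y} e^{tL}(x,z) ]. -/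
theorem stmt_1 (lam : ℕ → ℝ) (s M : ℝ) (hs : 0 < s)
    (hlb : ∀ x, s ≤ lam x) (hub : ∀ x, lam x ≤ M)
    (R : ℝ) (hR : M < R) (t : ℝ) (ht : 0 ≤ t) (x y : ℕ) :
    eL lam R t x y = -((lam x : ℂ) / (lam y : ℂ)) *
      ((∑ z ∈ Finset.range (y + 1), eL lam R t (x + 1) z) -
       (∑ z ∈ Finset.range (y + 1), eL lam R t x z)) :=
  stmt_1_general lam s M hs hlb hub R hR t x y
end

section
/- Let λ : ℤ₊ → ℝ satisfy (UB). For every N ≥ 1 and x ∈ W^N: 𝔥_N(x) = det( 𝔍_{i−1}(x_j) )_{i,j=1}^N, where the functions 𝔍_i : ℤ₊ → ℝ are defined by 𝔍_0 ≡ 1 and 𝔍_i(x) = Σ_{y=0}^{x−1} λ(y)^{−1} 𝔍_{i−1}(y) for i ≥ 1. -/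
open Complex MeasureTheory Finset
open scoped Real ComplexOrder

/-- y ≺ x : interlacing, x_1 ≤ y_1 < x_2 ≤ y_2 < ⋯ ≤ y_N < x_{N+1}.
(Membership of (y,x) in W^{N,N+1} is exactly this condition.) -/
def Interlace {N : ℕ} (y : Fin N → ℕ) (x : Fin (N + 1) → ℕ) : Prop :=
  ∀ i : Fin N, x i.castSucc ≤ y i ∧ y i < x i.succ

instance {N : ℕ} (y : Fin N → ℕ) (x : Fin (N + 1) → ℕ) : Decidable (Interlace y x) :=
  inferInstanceAs (Decidable (∀ i : Fin N, x i.castSucc ≤ y i ∧ y i < x i.succ))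

/-- 𝔥_N, defined recursively: 𝔥_1 ≡ 1 and 𝔥_{N+1}(x) = Σ_{y ≺ x} ∏ λ(y_i)⁻¹ 𝔥_N(y)
(so 𝔥_1(x) = 1 since the empty interlacing condition is vacuous and the unique
y : Fin 0 → ℕ contributes the empty product). -/
noncomputable def hfun (lam : ℕ → ℝ) : (N : ℕ) → (Fin N → ℕ) → ℝ
  | 0, _ => 1
  | (N + 1), x => ∑' y : { y : Fin N → ℕ // Interlace y x },
      (∏ i, (lam (y.1 i))⁻¹) * hfun lam N y.1

/-- 𝔍_i : 𝔍_0 ≡ 1, 𝔍_i(x) = Σ_{y=0}^{x−1} λ(y)⁻¹ 𝔍_{i−1}(y). -/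
noncomputable def JF (lam : ℕ → ℝ) : ℕ → ℕ → ℝ
  | 0, _ => 1
  | (i + 1), x => ∑ z ∈ Finset.range x, (lam z)⁻¹ * JF lam i z

lemma JF_Ico (lam : ℕ → ℝ) (i : ℕ) {a b : ℕ} (h : a ≤ b) :
    ∑ z ∈ Finset.Ico a b, (lam z)⁻¹ * JF lam i z = JF lam (i+1) b - JF lam (i+1) a := by
  simp only [JF]
  exact Finset.sum_Ico_eq_sub _ h

lemma hfun_succ_eq_sum (lam : ℕ → ℝ) {N : ℕ} (x : Fin (N+1) → ℕ) :
    hfun lam (N+1) x = ∑ y ∈ Fintype.piFinset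
      (fun j : Fin N => Finset.Ico (x j.castSucc) (x j.succ)),
      (∏ i, (lam (y i))⁻¹) * hfun lam N y := by
  have key : ∀ y : Fin N → ℕ, Interlace y x ↔
      y ∈ Fintype.piFinset (fun j : Fin N => Finset.Ico (x j.castSucc) (x j.succ)) := by
    intro y
    simp [Interlace, Fintype.mem_piFinset, Finset.mem_Ico]
  let e : { y : Fin N → ℕ // Interlace y x } ≃
      { y : Fin N → ℕ // y ∈ Fintype.piFinset (fun j : Fin N => Finset.Ico (x j.castSucc) (x j.succ)) } :=
    Equiv.subtypeEquivRight key
  rw [show hfun lam (N+1) x = ∑' y : { y : Fin N → ℕ // Interlace y x },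
      (∏ i, (lam (y.1 i))⁻¹) * hfun lam N y.1 from rfl]
  rw [← Finset.tsum_subtype]
  exact e.tsum_eq (fun y => (∏ i, (lam (y.1 i))⁻¹) * hfun lam N y.1)

lemma main_lemma (lam : ℕ → ℝ) : ∀ N (x : Fin (N+1) → ℕ), StrictMono x →
    hfun lam (N+1) x = (Matrix.of fun i j : Fin (N+1) => JF lam (i : ℕ) (x j)).det := by
  intro N
  induction N with
  | zero =>
    intro x hx
    rw [hfun_succ_eq_sum]
    simp [Matrix.det_fin_one, JF, hfun]
  | succ N IH =>
    intro x hx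
    rw [hfun_succ_eq_sum]
    set F := (Matrix.detRowAlternating (R := ℝ) (n := Fin (N+1))).toMultilinearMap with hF
    -- rewrite each hfun via IH
    have step1 : ∀ y ∈ Fintype.piFinset
        (fun j : Fin (N+1) => Finset.Ico (x j.castSucc) (x j.succ)),
        (∏ i, (lam (y i))⁻¹) * hfun lam (N+1) y =
        F (fun j => (lam (y j))⁻¹ • (fun i : Fin (N+1) => JF lam (i : ℕ) (y j))) := by
      intro y hy
      rw [Fintype.mem_piFinset] at hy
      have hmono : StrictMono y := by
        intro i j hij
        have h1 : y i < x i.succ := (Finset.mem_Ico.1 (hy i)).2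
        have h2 : x j.castSucc ≤ y j := (Finset.mem_Ico.1 (hy j)).1
        have hij' : (i : ℕ) < (j : ℕ) := hij
        have h3 : x i.succ ≤ x j.castSucc := hx.monotone (by
          rw [Fin.le_def]; simp only [Fin.val_succ, Fin.coe_castSucc]; omega)
        omega
      rw [IH y hmono]
      rw [F.map_smul_univ (fun j => (lam (y j))⁻¹)
        (fun j => (fun i : Fin (N+1) => JF lam (i : ℕ) (y j)))]
      rw [smul_eq_mul]
      congr 1
      rw [← Matrix.det_transpose]
      rfl
    rw [Finset.sum_congr rfl step1]
    rw [← F.map_sum_finset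
      (fun (j : Fin (N+1)) (z : ℕ) => (lam z)⁻¹ • (fun i : Fin (N+1) => JF lam (i : ℕ) z))
      (fun j : Fin (N+1) => Finset.Ico (x j.castSucc) (x j.succ))]
    -- now LHS = det B where B j i = ∑ z ∈ Ico .., (lam z)⁻¹ * JF i z
    have hrow : (fun j : Fin (N+1) => ∑ z ∈ Finset.Ico (x j.castSucc) (x j.succ),
          (lam z)⁻¹ • (fun i : Fin (N+1) => JF lam (i : ℕ) z)) =
        (fun j : Fin (N+1) => (fun i : Fin (N+1) =>
          JF lam ((i : ℕ)+1) (x j.succ) - JF lam ((i : ℕ)+1) (x j.castSucc))) := by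
      funext j
      have : (∑ z ∈ Finset.Ico (x j.castSucc) (x j.succ),
          (lam z)⁻¹ • (fun i : Fin (N+1) => JF lam (i : ℕ) z)) =
          fun i : Fin (N+1) => ∑ z ∈ Finset.Ico (x j.castSucc) (x j.succ),
            (lam z)⁻¹ * JF lam (i : ℕ) z := by
        funext i
        simp [Finset.sum_apply]
      rw [this]
      funext i
      exact JF_Ico lam (i : ℕ) (hx.monotone (Fin.castSucc_le_succ j))
    rw [hrow]
    -- LHS is now det Bᵀ where B i j = JF (i+1) (x j.succ) - JF (i+1) (x j.castSucc)
    have lhs_eq : F (fun j : Fin (N+1) => (fun i : Fin (N+1) =>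
          JF lam ((i : ℕ)+1) (x j.succ) - JF lam ((i : ℕ)+1) (x j.castSucc))) =
        (Matrix.of fun i j : Fin (N+1) =>
          JF lam ((i : ℕ)+1) (x j.succ) - JF lam ((i : ℕ)+1) (x j.castSucc)).det := by
      rw [← Matrix.det_transpose]
      rfl
    rw [lhs_eq]
    -- RHS: column operations
    set C : Matrix (Fin (N+2)) (Fin (N+2)) ℝ :=
      Matrix.of fun i j : Fin (N+2) => JF lam (i : ℕ) (x j) with hC
    set D : Matrix (Fin (N+2)) (Fin (N+2)) ℝ :=
      Matrix.of fun i j : Fin (N+2) => Fin.cases (C i 0)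
        (fun j' : Fin (N+1) => C i j'.succ - C i j'.castSucc) j with hD
    have hCD : C.det = D.det := by
      apply Matrix.det_eq_of_forall_col_eq_smul_add_pred (fun _ => 1)
      · intro i; rfl
      · intro i j
        simp [hD, Matrix.of_apply]
        try ring
    have hD00 : D 0 0 = 1 := by simp [hD, hC, JF]
    have hD0succ : ∀ j : Fin (N+1), D 0 j.succ = 0 := by
      intro j; simp [hD, hC, JF]
    have hsub : D.submatrix Fin.succ Fin.succ =
        Matrix.of (fun i j : Fin (N+1) =>
          JF lam ((i : ℕ)+1) (x j.succ) - JF lam ((i : ℕ)+1) (x j.castSucc)) := by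
      funext i j
      simp [hD, hC, Matrix.submatrix_apply]
    have hDdet : D.det = (Matrix.of (fun i j : Fin (N+1) =>
        JF lam ((i : ℕ)+1) (x j.succ) - JF lam ((i : ℕ)+1) (x j.castSucc))).det := by
      rw [Matrix.det_succ_row_zero, Fin.sum_univ_succ, hD00]
      have hzero : (∑ j : Fin (N+1), (-1 : ℝ) ^ ((j.succ : Fin (N+2)) : ℕ) * D 0 j.succ *
          (D.submatrix Fin.succ (j.succ).succAbove).det) = 0 := by
        apply Finset.sum_eq_zero
        intro j _
        rw [hD0succ j]
        ring
      rw [hzero, add_zero, Fin.succAbove_zero, hsub]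
      simp
    rw [show (Matrix.of fun i j : Fin (N+2) => JF lam (i : ℕ) (x j)).det = C.det from rfl,
      hCD, hDdet]

/-- 𝔥_N(x) = det(𝔍_{i−1}(x_j))_{i,j=1}^N for x ∈ W^N. -/
theorem stmt_11 (lam : ℕ → ℝ) (s M : ℝ) (hs : 0 < s)
    (hlb : ∀ x, s ≤ lam x) (hub : ∀ x, lam x ≤ M)
    (N : ℕ) (hN : 1 ≤ N) (x : Fin N → ℕ) (hx : StrictMono x) :
    hfun lam N x = (Matrix.of fun i j : Fin N => JF lam (i : ℕ) (x j)).det := by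
  cases N with
  | zero => omega
  | succ n => exact main_lemma lam n x hx
end

section
/- Let λ : ℤ₊ → ℝ satisfy (UB). For every integer k ≥ 2 and every x ∈ ℤ₊: Σ_{y ∈ ℤ₊} φ^{(k−1)}(y,x) = (1/(2πi)) ∮_{C_0} p_x(w) w^{−k} dw, where C_0 is the counterclockwise circle |w| = r for any fixed 0 < r < s; equivalently, this common value is the coefficient of w^{k−1} in the polynomial p_x(w). -/
open Complex MeasureTheory Finset
open scoped Real ComplexOrder

/-- φ(y,x) = −λ(y)⁻¹ 1(x > y). -/
noncomputable def phiF (lam : ℕ → ℝ) (y x : ℕ) : ℝ :=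
  if y < x then -(lam y)⁻¹ else 0

/-- Convolution powers: `phik lam k` is φ^{(k+1)}, i.e. `phik lam 0 = φ^{(1)} = φ` and
φ^{(k+1)}(y,x) = Σ_z φ(y,z) φ^{(k)}(z,x) (the sum over z ∈ ℤ₊ reduces to z < x since
φ^{(k)}(z,x) vanishes unless z < x). -/
noncomputable def phik (lam : ℕ → ℝ) : ℕ → ℕ → ℕ → ℝ
  | 0, y, x => phiF lam y x
  | (k + 1), y, x => ∑ z ∈ Finset.range x, phiF lam y z * phik lam k z x

/-! Expanding the product, `p_x(w) = ∑_{T ⊆ {0,…,x-1}} (∏_{i ∈ T} -λ(i)⁻¹) w^{|T|}`, so integrating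
against `w^{-k}` around `0` keeps only the terms with `|T| = k - 1`: the contour integral is the
elementary symmetric sum of degree `k - 1` of the numbers `-λ(i)⁻¹`, `i < x`. Unrolling the
convolution, `φ^{(m+1)}(y, x)` is a sum over chains `y < z₁ < ⋯ < z_m < x`, i.e. `-λ(y)⁻¹` times the
degree-`m` elementary symmetric sum over the open interval `(y, x)`; summing over `y`, the least
element of the chain, gives the same degree-`(k - 1)` sum. -/

open Polynomial

namespace Finset

variable {ι R : Type*} [CommSemiring R]

theorem sum_powersetCard_succ_insert_prod [DecidableEq ι] {s : Finset ι} {a : ι} (ha : a ∉ s)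
    (g : ι → R) (m : ℕ) :
    ∑ t ∈ (insert a s).powersetCard (m + 1), ∏ i ∈ t, g i =
      ∑ t ∈ s.powersetCard (m + 1), ∏ i ∈ t, g i + g a * ∑ t ∈ s.powersetCard m, ∏ i ∈ t, g i := by
  have hnot : ∀ t ∈ s.powersetCard m, a ∉ t := fun t ht hat => ha ((mem_powersetCard.1 ht).1 hat)
  have hdisj : Disjoint (s.powersetCard (m + 1)) ((s.powersetCard m).image (insert a)) := by
    refine disjoint_left.2 fun t ht ht' => ?_
    obtain ⟨u, -, rfl⟩ := mem_image.1 ht'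
    exact ha ((mem_powersetCard.1 ht).1 (mem_insert_self a u))
  have hinj : Set.InjOn (insert a) (s.powersetCard m : Set (Finset ι)) := fun t ht u hu htu => by
    rw [← erase_insert (hnot t ht), ← erase_insert (hnot u hu), htu]
  rw [powersetCard_succ_insert ha, sum_union hdisj, sum_image hinj, mul_sum]
  exact congrArg _ (sum_congr rfl fun t ht => prod_insert (hnot t ht))

theorem sum_powersetCard_succ_prod_eq_sum_min [LinearOrder ι] (s : Finset ι) (g : ι → R)
    (m : ℕ) :
    ∑ t ∈ s.powersetCard (m + 1), ∏ i ∈ t, g i =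
      ∑ z ∈ s, g z * ∑ t ∈ {i ∈ s | z < i}.powersetCard m, ∏ i ∈ t, g i := by
  induction s using induction_on_min with
  | empty => rw [powersetCard_eq_empty.2 (by simp)]; simp
  | insert a s ha ih =>
    have has : a ∉ s := fun h => lt_irrefl a (ha a h)
    have hfilter : ∀ z ∈ s, {i ∈ insert a s | z < i} = {i ∈ s | z < i} := fun z hz => by
      rw [filter_insert, if_neg (ha z hz).not_gt]
    rw [sum_powersetCard_succ_insert_prod has, ih, sum_insert has, filter_insert,
      if_neg (lt_irrefl a), filter_true_of_mem ha, add_comm]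
    exact congrArg _ (sum_congr rfl fun z hz => by rw [hfilter z hz])

end Finset

theorem Polynomial.coeff_prod_one_add_C_mul_X {ι R : Type*} [CommSemiring R] (s : Finset ι)
    (a : ι → R) (n : ℕ) :
    (∏ i ∈ s, (1 + C (a i) * X)).coeff n = ∑ t ∈ s.powersetCard n, ∏ i ∈ t, a i := by
  classical
  simp only [prod_one_add, prod_mul_distrib, prod_const, ← map_prod,
    finsetSum_coeff, coeff_C_mul_X_pow, powersetCard_eq_filter, sum_filter, eq_comm]

theorem circleIntegral.integral_zpow {r : ℝ} (hr : 0 < r) (n : ℤ) :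
    ∮ w in C(0, r), w ^ n = if n = -1 then 2 * π * I else 0 := by
  split_ifs with hn
  · simpa [hn] using circleIntegral.integral_sub_inv_of_mem_ball (Metric.mem_ball_self (x := 0) hr)
  · simpa using circleIntegral.integral_sub_zpow_of_ne hn 0 0 r

theorem Polynomial.circleIntegral_eval_mul_zpow_neg (P : ℂ[X]) {r : ℝ} (hr : 0 < r) (n : ℕ) :
    (2 * π * I)⁻¹ * ∮ w in C(0, r), P.eval w * w ^ (-((n + 1 : ℕ) : ℤ)) = P.coeff n := by
  set N := P.natDegree + n + 1
  have hexpand : ∀ w ∈ Metric.sphere (0 : ℂ) r, P.eval w * w ^ (-((n + 1 : ℕ) : ℤ)) =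
      ∑ j ∈ range N, P.coeff j * w ^ ((j : ℤ) - (n + 1 : ℕ)) := fun w hw => by
    have hw0 : w ≠ 0 := Metric.ne_of_mem_sphere hw hr.ne'
    rw [eval_eq_sum_range' (n := N) (by omega), sum_mul]
    refine sum_congr rfl fun j _ => ?_
    rw [mul_assoc, ← zpow_natCast, ← zpow_add₀ hw0, sub_eq_add_neg]
  have hint : ∀ j ∈ range N,
      CircleIntegrable (fun w => P.coeff j * w ^ ((j : ℤ) - (n + 1 : ℕ))) 0 r := fun j _ =>
    (continuousOn_const.mul (continuousOn_id.zpow₀ _ fun w hw =>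
      Or.inl (Metric.ne_of_mem_sphere hw hr.ne'))).circleIntegrable hr.le
  rw [circleIntegral.integral_congr hr.le hexpand, circleIntegral.integral_fun_sum hint]
  have hexponent : ∀ j : ℕ, (j : ℤ) - (n + 1 : ℕ) = -1 ↔ j = n := by omega
  have h2πI : (2 * π * I : ℂ) ≠ 0 := by simp [Real.pi_ne_zero]
  simp only [circleIntegral.integral_const_mul, circleIntegral.integral_zpow hr, hexponent, mul_ite,
    mul_zero, sum_ite_eq', mem_range, show n < N by omega, if_true]
  rw [mul_left_comm, inv_mul_cancel₀ h2πI, mul_one]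

lemma range_filter_lt_eq_Ioo (y x : ℕ) : {i ∈ range x | y < i} = Ioo y x := by
  ext; simp only [mem_filter, mem_range, mem_Ioo]; omega

lemma phik_eq_phiF_mul (lam : ℕ → ℝ) (m y x : ℕ) :
    phik lam m y x =
      phiF lam y x * ∑ t ∈ (Ioo y x).powersetCard m, ∏ i ∈ t, -(lam i)⁻¹ := by
  induction m generalizing y with
  | zero => simp [phik]
  | succ m ih =>
    have hterm : ∀ z ∈ range x, phiF lam y z * phik lam m z x = if y < z then
        -(lam y)⁻¹ * (-(lam z)⁻¹ * ∑ t ∈ (Ioo z x).powersetCard m, ∏ i ∈ t, -(lam i)⁻¹)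
        else 0 := fun z hz => by
      rw [ih, phiF, phiF, if_pos (mem_range.1 hz)]
      split_ifs <;> simp
    rw [phik, sum_congr rfl hterm, sum_ite, sum_const_zero, add_zero, range_filter_lt_eq_Ioo]
    by_cases hyx : y < x
    · rw [← mul_sum, phiF, if_pos hyx, sum_powersetCard_succ_prod_eq_sum_min]
      refine congrArg _ (sum_congr rfl fun z hz => ?_)
      have hfilter : {i ∈ Ioo y x | z < i} = Ioo z x := by
        have := (mem_Ioo.1 hz).1
        ext; simp only [mem_filter, mem_Ioo]; omega
      rw [hfilter]
    · simp [phiF, hyx]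

lemma sum_phik_eq_sum_powersetCard (lam : ℕ → ℝ) (m x : ℕ) :
    ∑ y ∈ range x, phik lam m y x =
      ∑ t ∈ (range x).powersetCard (m + 1), ∏ i ∈ t, -(lam i)⁻¹ := by
  rw [sum_powersetCard_succ_prod_eq_sum_min]
  refine sum_congr rfl fun y hy => ?_
  rw [phik_eq_phiF_mul, phiF, if_pos (mem_range.1 hy), range_filter_lt_eq_Ioo]

lemma pF_eq_eval_prod (lam : ℕ → ℝ) (hlam : ∀ i, lam i ≠ 0) (x : ℕ) (w : ℂ) :
    pF lam x w = (∏ i ∈ range x, (1 + C (-(lam i : ℂ)⁻¹) * X)).eval w := by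
  rw [pF, eval_prod]
  refine prod_congr rfl fun i _ => ?_
  rw [eval_add, eval_one, eval_mul, eval_C, eval_X, sub_div, div_self (by exact_mod_cast hlam i)]
  ring

theorem stmt_17_general (lam : ℕ → ℝ) (s : ℝ) (hs : 0 < s)
    (hlb : ∀ x, s ≤ lam x)
    (k : ℕ) (hk : 2 ≤ k) (x : ℕ) (r : ℝ) (hr0 : 0 < r) :
    ((∑ y ∈ Finset.range x, phik lam (k - 2) y x : ℝ) : ℂ) =
      (2 * (Real.pi : ℂ) * Complex.I)⁻¹ *
        ∮ w in C(0, r), pF lam x w * w ^ (-(k : ℤ)) := by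
  obtain ⟨m, rfl⟩ := Nat.exists_eq_add_of_le' hk
  have hlam : ∀ i, lam i ≠ 0 := fun i => (hs.trans_le (hlb i)).ne'
  simp_rw [pF_eq_eval_prod lam hlam]
  rw [Nat.add_sub_cancel, sum_phik_eq_sum_powersetCard,
    circleIntegral_eval_mul_zpow_neg _ hr0 (m + 1), coeff_prod_one_add_C_mul_X]
  norm_cast

/-- for k ≥ 2 and x ∈ ℤ₊,
Σ_{y ∈ ℤ₊} φ^{(k−1)}(y,x) (a finite sum over y < x)
= (1/2πi) ∮_{C_0} p_x(w) w^{−k} dw, with C_0 the circle |w| = r, 0 < r < s;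
equivalently, this common value is the coefficient of w^{k−1} in the polynomial p_x(w). -/
theorem stmt_17 (lam : ℕ → ℝ) (s M : ℝ) (hs : 0 < s)
    (hlb : ∀ x, s ≤ lam x) (hub : ∀ x, lam x ≤ M)
    (k : ℕ) (hk : 2 ≤ k) (x : ℕ) (r : ℝ) (hr0 : 0 < r) (hrs : r < s) :
    ((∑ y ∈ Finset.range x, phik lam (k - 2) y x : ℝ) : ℂ) =
      (2 * (Real.pi : ℂ) * Complex.I)⁻¹ *
        ∮ w in C(0, r), pF lam x w * w ^ (-(k : ℤ)) :=
  stmt_17_general lam s hs hlb k hk x r hr0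
end
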